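/- arXiv:2210.09444 — 3 statements merged into one kernel-verified Lean document; each statement's English description precedes it below -/
import Mathlib

section
/- Let S and T be semigroups, φ: S → T a homomorphism, and α, β left actions of S and T respectively on a set X such that α is transitive, S is abelian, the image φ(S) is contained in the center of T, and α = β ∘ φ. Then α(S) = β(T). -/
/-- Let `S`, `T` be semigroups with `S` abelian, `φ : S → T` a semigroup
homomorphism whose image lies in the center of `T`, and `α`, `β` left actions of `S`, `T`
on a set `X` (semigroup homomorphisms into the monoid of self-maps of `X`), with `α`
transitive and `α = β ∘ φ`.  Then `α(S) = β(T)`. -/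
theorem statement1 {S T X : Type*} [CommSemigroup S] [Semigroup T]
    (φ : S → T) (hφ : ∀ s t : S, φ (s * t) = φ s * φ t)
    (hcenter : ∀ (s : S) (t : T), φ s * t = t * φ s)
    (α : S → X → X) (hα : ∀ s t : S, α (s * t) = α s ∘ α t)
    (β : T → X → X) (hβ : ∀ s t : T, β (s * t) = β s ∘ β t)
    (htrans : ∃ x₀ : X, ∀ x : X, ∃ s : S, α s x₀ = x)
    (hcomp : ∀ s : S, α s = β (φ s)) :
    Set.range α = Set.range β := by
  obtain ⟨x₀, hx₀⟩ := htrans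
  apply Set.eq_of_subset_of_subset
  · rintro f ⟨s, rfl⟩
    exact ⟨φ s, (hcomp s).symm⟩
  · rintro f ⟨t, rfl⟩
    obtain ⟨s, hs⟩ := hx₀ (β t x₀)
    refine ⟨s, funext fun x => ?_⟩
    obtain ⟨u, rfl⟩ := hx₀ x
    calc α s (α u x₀) = α (s * u) x₀ := by rw [hα]; rfl
      _ = α (u * s) x₀ := by rw [mul_comm]
      _ = α u (α s x₀) := by rw [hα]; rfl
      _ = α u (β t x₀) := by rw [hs]
      _ = β (φ u) (β t x₀) := by rw [hcomp]
      _ = β (φ u * t) x₀ := by rw [hβ]; rfl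
      _ = β (t * φ u) x₀ := by rw [hcenter]
      _ = β t (β (φ u) x₀) := by rw [hβ]; rfl
      _ = β t (α u x₀) := by rw [hcomp]
end

section
/- Let F, Γ be convergence spaces, R ⊆ F × Γ closed in the product convergence, A ⊆ R, and H: Γ → Γ satisfy: (f, γ) ∈ A implies (f, H(γ)) ∈ A; (f, H(γ)) ∈ R implies (f, γ) ∈ R. Suppose H is continuous at γ, and that every f appearing in some pair of cl(A) with (f, γ) ∈ R satisfies (f, γ) ∈ cl(A). Then (f, γ) ∈ cl(A) if and only if (f, H(γ)) ∈ cl(A). -/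
/-- `y` is a subnet of `x` (in the sense of Aarnes–Andenæs). -/
def IsSubnet {α ι κ : Type} (pι : Preorder ι) (pκ : Preorder κ)
    (y : κ → α) (x : ι → α) : Prop :=
  ∀ i₀ : ι, ∃ j₀ : κ, ∀ j : κ, pκ.le j₀ j → ∃ i : ι, pι.le i₀ i ∧ y j = x i

/-- A (proper) convergence space: a relation between nets (functions from preordered index
types) and points, such that constant nets converge to their value, subnets of convergent
nets converge to the same limit, and interleavings of two nets converging to a point
converge to that point. -/
structure ConvergenceSpace (α : Type) : Type 1 where
  conv : (ι : Type) → Preorder ι → (ι → α) → α → Prop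
  conv_const : ∀ (ι : Type) (pι : Preorder ι), Nonempty ι →
    ∀ a : α, conv ι pι (fun _ => a) a
  conv_subnet : ∀ (ι κ : Type) (pι : Preorder ι) (pκ : Preorder κ)
    (x : ι → α) (y : κ → α) (a : α),
    conv ι pι x a → IsSubnet pι pκ y x → conv κ pκ y a
  conv_interleave : ∀ (ι : Type) (pι : Preorder ι) (x y z : ι → α) (a : α),
    conv ι pι x a → conv ι pι y a → (∀ i, z i = x i ∨ z i = y i) → conv ι pι z a

/-- The product preorder on `ι × κ`. -/
def prodPre {ι κ : Type} (pι : Preorder ι) (pκ : Preorder κ) : Preorder (ι × κ) :=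
  letI := pι; letI := pκ; inferInstance

/-- The set of limits of nets valued in `A`, with respect to the product convergence on
`F × Γ`. -/
def netClosure {F Γ : Type} (CF : ConvergenceSpace F) (CΓ : ConvergenceSpace Γ)
    (A : Set (F × Γ)) : Set (F × Γ) :=
  { p | ∃ (ι : Type) (pι : Preorder ι) (z : ι → F × Γ),
      (∀ i, z i ∈ A) ∧ CF.conv ι pι (fun i => (z i).1) p.1 ∧
        CΓ.conv ι pι (fun i => (z i).2) p.2 }

/-- second half of the main theorem.  Let `F`, `Γ` be convergence
spaces, `R ⊆ F × Γ` closed in the product convergence, `A ⊆ R`, and `H : Γ → Γ` with: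
`(f, γ') ∈ A` implies `(f, H γ') ∈ A`, and `(f, H γ') ∈ R` implies `(f, γ') ∈ R`.
If `H` is continuous at `γ` and every `f` appearing in some pair of `cl A` with
`(f, γ) ∈ R` satisfies `(f, γ) ∈ cl A`, then `(f, γ) ∈ cl A ↔ (f, H γ) ∈ cl A`. -/
theorem statement10 {F Γ : Type} (CF : ConvergenceSpace F) (CΓ : ConvergenceSpace Γ)
    (R : Set (F × Γ))
    (hRclosed : ∀ (ι : Type) (pι : Preorder ι) (z : ι → F × Γ) (p : F × Γ),
      (∀ i, z i ∈ R) → CF.conv ι pι (fun i => (z i).1) p.1 →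
      CΓ.conv ι pι (fun i => (z i).2) p.2 → p ∈ R)
    (A : Set (F × Γ)) (hAR : A ⊆ R)
    (H : Γ → Γ)
    (hHA : ∀ p ∈ A, (p.1, H p.2) ∈ A)
    (hHR : ∀ (f' : F) (γ' : Γ), (f', H γ') ∈ R → (f', γ') ∈ R)
    (γ : Γ)
    (hcont : ∀ (ι : Type) (pι : Preorder ι) (γi : ι → Γ),
      CΓ.conv ι pι γi γ → CΓ.conv ι pι (fun i => H (γi i)) (H γ))
    (hloc : ∀ f' : F, (∃ γ'' : Γ, (f', γ'') ∈ netClosure CF CΓ A) →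
      (f', γ) ∈ R → (f', γ) ∈ netClosure CF CΓ A)
    (f : F) :
    (f, γ) ∈ netClosure CF CΓ A ↔ (f, H γ) ∈ netClosure CF CΓ A := by
  constructor
  · rintro ⟨ι, pι, z, hzA, hzf, hzγ⟩
    exact ⟨ι, pι, fun i => ((z i).1, H (z i).2), fun i => hHA _ (hzA i), hzf,
      hcont ι pι (fun i => (z i).2) hzγ⟩
  · rintro ⟨ι, pι, z, hzA, hzf, hzγ⟩
    have hR : (f, H γ) ∈ R := hRclosed ι pι z (f, H γ) (fun i => hAR (hzA i)) hzf hzγ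
    exact hloc f ⟨H γ, ι, pι, z, hzA, hzf, hzγ⟩ (hHR f γ hR)
end

section
/- Let X, Y be measurable spaces, μ a σ-finite measure on X, and k: X × Y → ℝ a product-measurable kernel function defining the integral operator (Lf)(y) = ∫ k(x,y) f(x) μ(dx). Let t_X, t_Y be measurable bijections of X and Y respectively such that μ is invariant under t_X. Then (Lf) ∘ t_Y = L(f ∘ t_X) holds for all measurable f (for which either side is defined) if and only if for every y ∈ Y, k(t_X⁻¹ x, y) = k(x, t_Y y) for μ-almost every x ∈ X. -/
/-!
Changing variables by the `μ`-preserving map `tX` turns `L (f ∘ tX) y` into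
`∫ k (tX⁻¹ x, y) f x ∂μ`, so the equivariance says that the kernels `g = k (·, tY y)` and
`h = k (tX⁻¹ ·, y)` have the same integral against every admissible test function. Testing
against `1_s · (1 + |g| + |h|)⁻¹` with `μ s < ∞` makes both sides integrable; for a σ-finite
measure, equal integrals over all such `s` force the weighted kernels, hence `g` and `h`,
to agree almost everywhere.
-/

open MeasureTheory Set

section

variable {X : Type*} [MeasurableSpace X] {μ : Measure X}

theorem forall_integral_mul_eq_iff_ae_eq [SigmaFinite μ] {g h : X → ℝ}
    (hg : Measurable g) (hh : Measurable h) :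
    (∀ f : X → ℝ, Measurable f → Integrable (fun x => g x * f x) μ →
      Integrable (fun x => h x * f x) μ → ∫ x, g x * f x ∂μ = ∫ x, h x * f x ∂μ) ↔
      g =ᵐ[μ] h := by
  refine ⟨fun H => ?_, fun H f _ _ _ => integral_congr_ae (H.mul Filter.EventuallyEq.rfl)⟩
  set φ : X → ℝ := fun x => (1 + |g x| + |h x|)⁻¹
  have hφ_pos : ∀ x, 0 < φ x := fun x => by positivity
  have hφ : Measurable φ := by fun_prop
  have weighted_le_one :
      ∀ u : X → ℝ, (∀ x, |u x| ≤ 1 + |g x| + |h x|) → ∀ x, ‖u x * φ x‖ ≤ 1 :=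
    fun u hu x => by
      rw [Real.norm_eq_abs, abs_mul, abs_of_pos (hφ_pos x), ← div_eq_mul_inv]
      exact div_le_one_of_le₀ (hu x) (by positivity)
  have integrableOn_weighted : ∀ u : X → ℝ, Measurable u →
      (∀ x, |u x| ≤ 1 + |g x| + |h x|) → ∀ s, MeasurableSet s → μ s < ⊤ →
      IntegrableOn (fun x => u x * φ x) s μ :=
    fun u hu hle s _ hs => Measure.integrableOn_of_bounded (M := 1) hs.ne
      (hu.mul hφ).aestronglyMeasurable (Filter.Eventually.of_forall (weighted_le_one u hle))
  have hg_le : ∀ x, |g x| ≤ 1 + |g x| + |h x| := fun x => by linarith [abs_nonneg (h x)]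
  have hh_le : ∀ x, |h x| ≤ 1 + |g x| + |h x| := fun x => by linarith [abs_nonneg (g x)]
  have hweighted : (fun x => g x * φ x) =ᵐ[μ] fun x => h x * φ x := by
    refine ae_eq_of_forall_setIntegral_eq_of_sigmaFinite
      (integrableOn_weighted g hg hg_le) (integrableOn_weighted h hh hh_le) fun s hs hμs => ?_
    have hind : ∀ u : X → ℝ,
        (fun x => u x * s.indicator φ x) = s.indicator (fun x => u x * φ x) :=
      fun u => funext fun x => (indicator_mul_right s u φ).symm
    have key := H (s.indicator φ) (hφ.indicator hs)
    simp only [hind, integral_indicator hs, integrable_indicator_iff hs] at key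
    exact key (integrableOn_weighted g hg hg_le s hs hμs)
      (integrableOn_weighted h hh hh_le s hs hμs)
  filter_upwards [hweighted] with x hx
  exact mul_right_cancel₀ (hφ_pos x).ne' hx

variable {t : X ≃ᵐ X}

theorem MeasureTheory.MeasurePreserving.integral_mul_comp_eq
    (ht : MeasurePreserving t μ μ) (a f : X → ℝ) :
    ∫ x, a x * f (t x) ∂μ = ∫ x, a (t.symm x) * f x ∂μ := by
  simpa using ht.integral_comp' fun x => a (t.symm x) * f x

theorem MeasureTheory.MeasurePreserving.integrable_mul_comp_iff
    (ht : MeasurePreserving t μ μ) (a f : X → ℝ) :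
    Integrable (fun x => a x * f (t x)) μ ↔ Integrable (fun x => a (t.symm x) * f x) μ := by
  simpa [Function.comp_def] using
    ht.integrable_comp_emb t.measurableEmbedding (g := fun x => a (t.symm x) * f x)

end

/-- Let `μ` be a σ-finite measure on `X`, `k : X × Y → ℝ` a
product-measurable kernel function defining the integral operator
`(L f) y = ∫ k (x, y) * f x ∂μ`, and `tX`, `tY` measurable bijections of `X`, `Y` with
`μ` invariant under `tX`.  Then `(L f) ∘ tY = L (f ∘ tX)` for all measurable `f` for
which the integrals are defined, if and only if for every `y`,
`k (tX⁻¹ x, y) = k (x, tY y)` for `μ`-almost every `x`. -/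
theorem statement14 {X Y : Type} [MeasurableSpace X] [MeasurableSpace Y]
    (μ : Measure X) [SigmaFinite μ]
    (k : X → Y → ℝ) (hk : Measurable fun p : X × Y => k p.1 p.2)
    (tX : X ≃ᵐ X) (tY : Y ≃ᵐ Y)
    (hμinv : Measure.map tX μ = μ) :
    (∀ f : X → ℝ, Measurable f → ∀ y : Y,
        Integrable (fun x => k x (tY y) * f x) μ →
        Integrable (fun x => k x y * f (tX x)) μ →
        ∫ x, k x (tY y) * f x ∂μ = ∫ x, k x y * f (tX x) ∂μ) ↔
      ∀ y : Y, ∀ᵐ x ∂μ, k (tX.symm x) y = k x (tY y) := by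
  have ht : MeasurePreserving tX μ μ := ⟨tX.measurable, hμinv⟩
  have hk_left : ∀ y, Measurable fun x => k x y := fun y =>
    hk.comp (measurable_id.prodMk measurable_const)
  have hequiv : ∀ y, _ := fun y => forall_integral_mul_eq_iff_ae_eq (μ := μ)
    (h := fun x => k (tX.symm x) y) (hk_left (tY y)) ((hk_left y).comp tX.symm.measurable)
  simp only [ht.integral_mul_comp_eq, ht.integrable_mul_comp_iff]
  constructor
  · intro H y
    exact ((hequiv y).1 fun f hf => H f hf y).symm
  · intro H f hf y
    exact (hequiv y).2 (Filter.EventuallyEq.symm (H y)) f hf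
end
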